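/- Let M1 = DLS(ρ1; D1, D2) be a DLS matrix of order n over F_{2^r}, and suppose ρ2 ∈ S_n is conjugate to ρ1 (i.e., ρ2 = σ·ρ1·σ^{-1} for some σ ∈ S_n). Then there exist a nonsingular diagonal matrix D1' and a diagonal matrix D2' over F_{2^r} such that, with P the permutation matrix of σ, P·M1·P^{-1} = DLS(ρ2; D1', D2'); consequently, for every positive integer k, M1 is k-NMDS if and only if M2 = DLS(ρ2; D1', D2') is k-NMDS. -/

import Mathlib

open Matrix

/-- The Hamming weight of a vector: the number of nonzero coordinates. -/
def wt {F : Type*} [Zero F] [DecidableEq F] {n : ℕ} (x : Fin n → F) : ℕ :=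
  (Finset.univ.filter fun i => x i ≠ 0).card

/-- The differential branch number of a square matrix `M`:
the minimum of `wt x + wt (M x)` over all nonzero vectors `x`. -/
noncomputable def branchD {F : Type*} [Field F] [DecidableEq F] {n : ℕ}
    (M : Matrix (Fin n) (Fin n) F) : ℕ :=
  sInf {k | ∃ x : Fin n → F, x ≠ 0 ∧ k = wt x + wt (M.mulVec x)}

/-- The linear branch number of a square matrix `M`:
the minimum of `wt x + wt (Mᵀ x)` over all nonzero vectors `x`. -/
noncomputable def branchL {F : Type*} [Field F] [DecidableEq F] {n : ℕ}
    (M : Matrix (Fin n) (Fin n) F) : ℕ :=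
  sInf {k | ∃ x : Fin n → F, x ≠ 0 ∧ k = wt x + wt (Mᵀ.mulVec x)}

/-- A square matrix of order `n` is near-MDS (NMDS) if both its differential
and linear branch numbers equal `n`. -/
def IsNMDS {F : Type*} [Field F] [DecidableEq F] {n : ℕ}
    (M : Matrix (Fin n) (Fin n) F) : Prop :=
  branchD M = n ∧ branchL M = n
/-- The permutation matrix associated to a permutation `σ`
(a 0-1 matrix obtained by permuting the rows of the identity matrix). -/
def permMatrix (F : Type*) [Zero F] [One F] {n : ℕ} (σ : Equiv.Perm (Fin n)) :
    Matrix (Fin n) (Fin n) F :=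
  Matrix.of fun i j => if i = σ j then 1 else 0
/-- The diagonal-like sparse (DLS) matrix `DLS(σ; D1, D2) = P·D1 + D2`, where `P` is
the permutation matrix of `σ`. -/
def DLS {F : Type*} [Field F] {n : ℕ} (σ : Equiv.Perm (Fin n)) (D1 D2 : Fin n → F) :
    Matrix (Fin n) (Fin n) F :=
  permMatrix F σ * Matrix.diagonal D1 + Matrix.diagonal D2

/-!
Conjugating by the permutation matrix of `σ` is the simultaneous reindexing of rows and columns
by `σ⁻¹`. This reindexing sends `DLS(ρ; D1, D2)` to `DLS(σρσ⁻¹; D1 ∘ σ⁻¹, D2 ∘ σ⁻¹)`, commutes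
with powers and transposition, and preserves both branch numbers, since it only permutes the
coordinates of `x` and of `Mx`.
-/

open Equiv

lemma wt_comp_perm {F : Type*} [Zero F] [DecidableEq F] {n : ℕ} (x : Fin n → F)
    (e : Perm (Fin n)) : wt (x ∘ e) = wt x := by
  unfold wt
  rw [← Finset.card_map e.toEmbedding]
  congr 1
  ext j
  simp [Finset.mem_map_equiv]

lemma Matrix.submatrix_equiv_pow {l m α : Type*} [Fintype l] [Fintype m] [DecidableEq l]
    [DecidableEq m] [Semiring α] (M : Matrix m m α) (e : l ≃ m) (k : ℕ) :
    M.submatrix e e ^ k = (M ^ k).submatrix e e := by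
  induction k with
  | zero => simp
  | succ k ih => rw [pow_succ, ih, submatrix_mul_equiv, pow_succ]

section BranchNumber
variable {F : Type*} [Field F] [DecidableEq F] {n : ℕ}

lemma branchL_eq_branchD_transpose (M : Matrix (Fin n) (Fin n) F) : branchL M = branchD Mᵀ :=
  rfl

lemma branchD_submatrix_perm (M : Matrix (Fin n) (Fin n) F) (e : Perm (Fin n)) :
    branchD (M.submatrix e e) = branchD M := by
  have hwt : ∀ y : Fin n → F,
      wt (y ∘ e) + wt (M.submatrix e e *ᵥ (y ∘ e)) = wt y + wt (M *ᵥ y) := by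
    intro y
    rw [submatrix_mulVec_equiv, Function.comp_assoc, e.self_comp_symm, Function.comp_id,
      wt_comp_perm, wt_comp_perm]
  let L := LinearEquiv.funCongrLeft F F e
  unfold branchD
  congr 1
  ext k
  refine L.toEquiv.exists_congr_right.symm.trans (exists_congr fun y => ?_)
  simp only [LinearEquiv.coe_toEquiv, ne_eq, L.map_eq_zero_iff]
  rw [← hwt]
  rfl

lemma isNMDS_submatrix_perm (M : Matrix (Fin n) (Fin n) F) (e : Perm (Fin n)) :
    IsNMDS (M.submatrix e e) ↔ IsNMDS M := by
  rw [IsNMDS, IsNMDS, branchL_eq_branchD_transpose, branchL_eq_branchD_transpose,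
    transpose_submatrix, branchD_submatrix_perm, branchD_submatrix_perm]

end BranchNumber

section PermMatrix
variable {F : Type*} {n : ℕ}

lemma permMatrix_eq_permMatrix_inv [Zero F] [One F] (σ : Perm (Fin n)) :
    permMatrix F σ = (σ⁻¹).permMatrix F := by
  ext i j
  simp only [permMatrix, of_apply, PEquiv.toMatrix_apply, toPEquiv_apply, Option.mem_def,
    Option.some.injEq, Perm.inv_def, Equiv.eq_symm_apply, eq_comm]

variable [CommRing F]

lemma inv_permMatrix (σ : Perm (Fin n)) : (permMatrix F σ)⁻¹ = permMatrix F σ⁻¹ := by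
  apply inv_eq_right_inv
  rw [permMatrix_eq_permMatrix_inv, permMatrix_eq_permMatrix_inv, ← permMatrix_mul]
  simp

lemma permMatrix_mul_mul_inv (σ : Perm (Fin n)) (M : Matrix (Fin n) (Fin n) F) :
    permMatrix F σ * M * (permMatrix F σ)⁻¹ = M.submatrix ⇑σ⁻¹ ⇑σ⁻¹ := by
  rw [inv_permMatrix, permMatrix_eq_permMatrix_inv, permMatrix_eq_permMatrix_inv, inv_inv,
    PEquiv.toMatrix_toPEquiv_mul, PEquiv.mul_toMatrix_toPEquiv, submatrix_submatrix]
  rfl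

end PermMatrix

section DLS
variable {F : Type*} [Field F] {n : ℕ}

lemma DLS_apply (ρ : Perm (Fin n)) (D1 D2 : Fin n → F) (i j : Fin n) :
    DLS ρ D1 D2 i j = (if i = ρ j then D1 j else 0) + (if i = j then D2 i else 0) := by
  simp [DLS, permMatrix, diagonal_apply]

lemma DLS_submatrix (ρ e : Perm (Fin n)) (D1 D2 : Fin n → F) :
    (DLS ρ D1 D2).submatrix e e = DLS (e⁻¹ * ρ * e) (D1 ∘ e) (D2 ∘ e) := by
  ext i j
  simp [DLS_apply, Equiv.eq_symm_apply]

end DLS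

theorem stmt_14_general {F : Type*} [Field F] [DecidableEq F]
    {n : ℕ} (ρ1 ρ2 σ : Equiv.Perm (Fin n))
    (hconj : ρ2 = σ * ρ1 * σ⁻¹)
    (D1 D2 : Fin n → F) (hD1 : ∀ i, D1 i ≠ 0) :
    ∃ D1' D2' : Fin n → F, (∀ i, D1' i ≠ 0) ∧
      permMatrix F σ * DLS ρ1 D1 D2 * (permMatrix F σ)⁻¹ = DLS ρ2 D1' D2' ∧
      ∀ k : ℕ, 0 < k →
        (IsNMDS (DLS ρ1 D1 D2 ^ k) ↔ IsNMDS (DLS ρ2 D1' D2' ^ k)) := by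
  have hconj_DLS : permMatrix F σ * DLS ρ1 D1 D2 * (permMatrix F σ)⁻¹
      = DLS ρ2 (D1 ∘ ⇑σ⁻¹) (D2 ∘ ⇑σ⁻¹) := by
    rw [permMatrix_mul_mul_inv, DLS_submatrix, inv_inv, hconj]
  refine ⟨D1 ∘ ⇑σ⁻¹, D2 ∘ ⇑σ⁻¹, fun i => hD1 _, hconj_DLS, fun k _ => ?_⟩
  rw [← hconj_DLS, permMatrix_mul_mul_inv, submatrix_equiv_pow, isNMDS_submatrix_perm]

/-- If ρ₂ = σ·ρ₁·σ⁻¹ is conjugate to ρ₁, then with P the permutation matrix of σ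
there are diagonal matrices D1' (nonsingular) and D2' with
P·DLS(ρ₁;D1,D2)·P⁻¹ = DLS(ρ₂;D1',D2'); hence for every k > 0, DLS(ρ₁;D1,D2) is
k-NMDS iff DLS(ρ₂;D1',D2') is k-NMDS. -/
theorem stmt_14 {F : Type*} [Field F] [Fintype F] [DecidableEq F] [CharP F 2]
    {n : ℕ} (ρ1 ρ2 σ : Equiv.Perm (Fin n)) (hρ1 : ∀ i, ρ1 i ≠ i)
    (hconj : ρ2 = σ * ρ1 * σ⁻¹)
    (D1 D2 : Fin n → F) (hD1 : ∀ i, D1 i ≠ 0) :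
    ∃ D1' D2' : Fin n → F, (∀ i, D1' i ≠ 0) ∧
      permMatrix F σ * DLS ρ1 D1 D2 * (permMatrix F σ)⁻¹ = DLS ρ2 D1' D2' ∧
      ∀ k : ℕ, 0 < k →
        (IsNMDS (DLS ρ1 D1 D2 ^ k) ↔ IsNMDS (DLS ρ2 D1' D2' ^ k)) :=
  stmt_14_general ρ1 ρ2 σ hconj D1 D2 hD1
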